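/- Let φ : g → h be a quasi-isomorphism of DG Lie algebras over a field K of characteristic 0, and let (R, m) be an artinian local K-algebra with R/m = K. Let ω ∈ MC(m ⊗ g) and χ := φ(ω). Then φ : (m ⊗ g, d_ω) → (m ⊗ h, d_χ) is a quasi-isomorphism of complexes. -/

import Mathlib

/-!
Filter `m ⊗ g` by the subcomplexes `mᵏ ⊗ g`; the filtration is finite because `m` is nilpotent.
Since `ω ∈ m ⊗ g¹`, the twisting term `[ω, -]` raises the filtration degree, so on the graded
piece `(mᵏ/mᵏ⁺¹) ⊗ g` the differential `d_ω` is just `d`. Choosing a basis of `mᵏ/mᵏ⁺¹` over `K`,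
that piece is a direct sum of copies of `g`, on which `φ` is a quasi-isomorphism. A five-lemma
style induction along the finite filtration then shows that `φ` is a quasi-isomorphism for `d_ω`.
-/

open scoped TensorProduct

/-- A (ℤ-graded) DG Lie algebra over a field `K` of characteristic `0`. -/
structure DGLA (K : Type) [Field K] : Type 1 where
  L : Type
  [acg : AddCommGroup L]
  [mod : Module K L]
  grading : ℤ → Submodule K L
  isInternal : DirectSum.IsInternal grading
  d : L →ₗ[K] L
  d_sq : ∀ x, d (d x) = 0
  d_deg : ∀ (i : ℤ), ∀ x ∈ grading i, d x ∈ grading (i + 1)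
  bracket : L →ₗ[K] L →ₗ[K] L
  bracket_deg : ∀ (i j : ℤ), ∀ x ∈ grading i, ∀ y ∈ grading j, bracket x y ∈ grading (i + j)
  bracket_antisymm : ∀ (i j : ℤ), ∀ x ∈ grading i, ∀ y ∈ grading j,
    bracket x y = -(((Int.negOnePow (i * j) : ℤˣ) : ℤ) • bracket y x)
  bracket_jacobi : ∀ (i j k : ℤ), ∀ x ∈ grading i, ∀ y ∈ grading j, ∀ z ∈ grading k,
    ((Int.negOnePow (i * k) : ℤˣ) : ℤ) • bracket x (bracket y z)
      + ((Int.negOnePow (j * i) : ℤˣ) : ℤ) • bracket y (bracket z x)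
      + ((Int.negOnePow (k * j) : ℤˣ) : ℤ) • bracket z (bracket x y) = 0
  d_leibniz : ∀ (i : ℤ), ∀ x ∈ grading i, ∀ y : L,
    d (bracket x y) = bracket (d x) y + ((Int.negOnePow i : ℤˣ) : ℤ) • bracket x (d y)

attribute [instance] DGLA.acg DGLA.mod

namespace DGLA

variable {K : Type} [Field K] (g : DGLA K)

/-- The Maurer–Cartan condition: `ω ∈ g¹` and `d ω + ½[ω,ω] = 0`. -/
def IsMC (ω : g.L) : Prop :=
  ω ∈ g.grading 1 ∧ g.d ω + (2 : K)⁻¹ • g.bracket ω ω = 0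

/-- The twisted differential `d_ω = d + ad(ω)`. -/
def dMC (ω : g.L) : g.L →ₗ[K] g.L := g.d + g.bracket ω

/-- Lower central series of the underlying graded Lie algebra. -/
def lcs : ℕ → Submodule K g.L
  | 0 => ⊤
  | n + 1 => Submodule.span K {z | ∃ x y, y ∈ lcs n ∧ z = g.bracket x y}

/-- Nilpotency of a DG Lie algebra. -/
def IsNilpotent : Prop := ∃ n, g.lcs n = ⊥

end DGLA

/-- Truncated exponential `∑_{i<n} fⁱ/i!` of an endomorphism. -/
noncomputable def expN {K : Type} [Field K] {M : Type} [AddCommGroup M] [Module K M]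
    (f : M →ₗ[K] M) (n : ℕ) : M →ₗ[K] M :=
  ∑ i ∈ Finset.range n, ((i.factorial : K)⁻¹) • f ^ i

/-- Truncated version of `(exp(f) - 1)/f`, namely `∑_{i<n} fⁱ/(i+1)!`. -/
noncomputable def expN' {K : Type} [Field K] {M : Type} [AddCommGroup M] [Module K M]
    (f : M →ₗ[K] M) (n : ℕ) : M →ₗ[K] M :=
  ∑ i ∈ Finset.range n, (((i + 1).factorial : K)⁻¹) • f ^ i

/-- The gauge action `Af(exp γ)(ω) = exp(ad γ)(ω) + ((1 - exp(ad γ))/ad γ)(d γ)`,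
with exponentials truncated at `n`. -/
noncomputable def DGLA.Af {K : Type} [Field K] (g : DGLA K) (γ : g.L) (n : ℕ) (ω : g.L) :
    g.L :=
  expN (g.bracket γ) n ω - expN' (g.bracket γ) n (g.d γ)

namespace DGLA

variable {K : Type} [Field K]

/-- The differential extended to `R ⊗ g`. -/
noncomputable def extD (g : DGLA K) (R : Type) [CommRing R] [Algebra K R] :
    R ⊗[K] g.L →ₗ[K] R ⊗[K] g.L :=
  LinearMap.lTensor R g.d

/-- The Lie bracket extended `R`-bilinearly to `R ⊗ g`:
`[a ⊗ x, b ⊗ y] = (ab) ⊗ [x, y]`. -/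
noncomputable def extBr (g : DGLA K) (R : Type) [CommRing R] [Algebra K R] :
    R ⊗[K] g.L →ₗ[K] R ⊗[K] g.L →ₗ[K] R ⊗[K] g.L :=
  TensorProduct.curry
    ((TensorProduct.map (LinearMap.mul' K R) (TensorProduct.lift g.bracket)).comp
      (TensorProduct.tensorTensorTensorComm K R g.L R g.L).toLinearMap)

/-- The curvature `cur(ω) = d(ω) + ½[ω,ω]` on `R ⊗ g`. -/
noncomputable def curR (g : DGLA K) (R : Type) [CommRing R] [Algebra K R]
    (ω : R ⊗[K] g.L) : R ⊗[K] g.L :=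
  g.extD R ω + algebraMap K R ((2 : K)⁻¹) • g.extBr R ω ω

/-- The submodule `I ⊗ gⁱ` of `R ⊗ g`, for an ideal `I ⊆ R`. -/
noncomputable def part (g : DGLA K) (R : Type) [CommRing R] [Algebra K R]
    (I : Ideal R) (i : ℤ) : Submodule R (R ⊗[K] g.L) :=
  I • ((g.grading i).baseChange R)

/-- A homomorphism of DG Lie algebras. -/
structure Hom (g h : DGLA K) where
  f : g.L →ₗ[K] h.L
  comm_d : ∀ x, f (g.d x) = h.d (f x)
  comm_br : ∀ x y, f (g.bracket x y) = h.bracket (f x) (f y)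
  map_grading : ∀ (i : ℤ), ∀ x ∈ g.grading i, f x ∈ h.grading i

/-- `φ : g → h` is a quasi-isomorphism: it induces isomorphisms on all cohomologies. -/
def Hom.IsQuasiIso {g h : DGLA K} (φ : Hom g h) : Prop :=
  ∀ i : ℤ,
    (∀ y ∈ h.grading i, h.d y = 0 → ∃ x ∈ g.grading i, g.d x = 0 ∧
      ∃ z ∈ h.grading (i - 1), φ.f x - y = h.d z) ∧
    (∀ x ∈ g.grading i, g.d x = 0 → (∃ z ∈ h.grading (i - 1), φ.f x = h.d z) →
      ∃ w ∈ g.grading (i - 1), x = g.d w)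

end DGLA


universe u

open TensorProduct

-- `FA k i` is the `k`-th step of the filtration in degree `i`; `dA` and `dB` raise the degree by
-- one.
structure FilteredCochainMap (A B : Type*) [AddCommGroup A] [AddCommGroup B] where
  FA : ℕ → ℤ → AddSubgroup A
  FB : ℕ → ℤ → AddSubgroup B
  dA : A →+ A
  dB : B →+ B
  f : A →+ B
  FA_antitone : ∀ i, Antitone (FA · i)
  FB_antitone : ∀ i, Antitone (FB · i)
  dA_dA : ∀ x, dA (dA x) = 0
  dB_dB : ∀ y, dB (dB y) = 0
  f_dA : ∀ x, f (dA x) = dB (f x)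
  f_mem : ∀ k i, ∀ x ∈ FA k i, f x ∈ FB k i

namespace FilteredCochainMap

variable {A B : Type*} [AddCommGroup A] [AddCommGroup B] (C : FilteredCochainMap A B)

-- Surjectivity, resp. injectivity, of `f` on the cohomology of the quotient complexes
-- `F k / F l`, written out on representatives.
def SurjMod (k l : ℕ) : Prop :=
  ∀ i, ∀ y ∈ C.FB k i, C.dB y ∈ C.FB l (i + 1) →
    ∃ x ∈ C.FA k i, C.dA x ∈ C.FA l (i + 1) ∧
      ∃ z ∈ C.FB k (i - 1), C.f x - y - C.dB z ∈ C.FB l i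

def InjMod (k l : ℕ) : Prop :=
  ∀ i, ∀ x ∈ C.FA k i, C.dA x ∈ C.FA l (i + 1) →
    ∀ z ∈ C.FB k (i - 1), C.f x - C.dB z ∈ C.FB l i →
      ∃ w ∈ C.FA k (i - 1), x - C.dA w ∈ C.FA l i

variable {C}

theorem surjMod_add (hS : ∀ k, C.SurjMod k (k + 1)) (hI : ∀ k, C.InjMod k (k + 1)) (k : ℕ) :
    ∀ n, C.SurjMod k (k + n)
  | 0 => fun _ y hy _ => ⟨0, zero_mem _, by simp, 0, zero_mem _, by simpa using neg_mem hy⟩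
  | n + 1 => by
    intro i y hy hdy
    have hkn := Nat.le_add_right k n
    obtain ⟨x₀, hx₀, hdx₀, z₀, hz₀, hη⟩ :=
      surjMod_add hS hI k n i y hy (C.FB_antitone _ (Nat.le_succ _) hdy)
    set η := C.f x₀ - y - C.dB z₀ with hη_def
    have hdη : C.f (C.dA x₀) - C.dB η = C.dB y := by
      simp only [hη_def, map_sub, C.dB_dB, C.f_dA]; abel
    -- first make `x₀` a cocycle modulo `F (k + n + 1)` ...
    obtain ⟨ξ, hξ, hdξ⟩ := hI (k + n) (i + 1) (C.dA x₀) hdx₀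
      (by rw [C.dA_dA]; exact zero_mem _) η (by rwa [add_sub_cancel_right]) (hdη ▸ hdy)
    rw [add_sub_cancel_right] at hξ
    -- ... then the error `η - f ξ` is a cocycle modulo `F (k + n + 1)`: correct it by an image
    have hdθ : C.dB (-(η - C.f ξ)) = C.dB y - C.f (C.dA x₀ - C.dA ξ) := by
      simp only [hη_def, map_neg, map_sub, C.dB_dB, ← C.f_dA]; abel
    obtain ⟨a, ha, hda, c, hc, hac⟩ := hS (k + n) i (-(η - C.f ξ))
      (neg_mem (sub_mem hη (C.f_mem _ _ ξ hξ))) (hdθ ▸ sub_mem hdy (C.f_mem _ _ _ hdξ))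
    refine ⟨x₀ - ξ + a, add_mem (sub_mem hx₀ (C.FA_antitone i hkn hξ)) (C.FA_antitone i hkn ha),
      ?_, z₀ + c, add_mem hz₀ (C.FB_antitone _ hkn hc), ?_⟩
    · rw [map_add, map_sub]; exact add_mem hdξ hda
    · have hx : C.f (x₀ - ξ + a) - y - C.dB (z₀ + c) = C.f a - -(η - C.f ξ) - C.dB c := by
        simp only [hη_def, map_add, map_sub]; abel
      exact hx ▸ hac

theorem injMod_add (hS : ∀ k, C.SurjMod k (k + 1)) (hI : ∀ k, C.InjMod k (k + 1)) (k : ℕ) :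
    ∀ n, C.InjMod k (k + n)
  | 0 => fun _ x hx _ _ _ _ => ⟨0, zero_mem _, by simpa using hx⟩
  | n + 1 => by
    intro i x hx hdx z hz hfz
    obtain ⟨w₀, hw₀, hρ⟩ := injMod_add hS hI k n i x hx (C.FA_antitone _ (Nat.le_succ _) hdx)
      z hz (C.FB_antitone _ (Nat.le_succ _) hfz)
    set ρ := x - C.dA w₀ with hρ_def
    have hdσ : C.dB (z - C.f w₀) = C.f ρ - (C.f x - C.dB z) := by
      simp only [hρ_def, map_sub, C.f_dA]; abel
    -- `z - f w₀` is a cocycle modulo `F (k + n)`: lift it, up to a coboundary, to `x₁`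
    obtain ⟨x₁, hx₁, hdx₁, z₁, -, hv⟩ := surjMod_add hS hI k n (i - 1) (z - C.f w₀)
      (sub_mem hz (C.f_mem _ _ _ hw₀))
      (by rw [sub_add_cancel, hdσ]
          exact sub_mem (C.f_mem _ _ _ hρ) (C.FB_antitone _ (Nat.le_succ _) hfz))
    rw [sub_add_cancel] at hdx₁
    set v := C.f x₁ - (z - C.f w₀) - C.dB z₁ with hv_def
    have hdu : C.dA (C.dA x₁ - ρ) = -C.dA x := by
      simp only [hρ_def, map_sub, C.dA_dA]; abel
    have hfu : C.f (C.dA x₁ - ρ) - C.dB v = -(C.f x - C.dB z) := by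
      simp only [hv_def, hρ_def, map_sub, C.f_dA, C.dB_dB]; abel
    obtain ⟨ξ, hξ, hdξ⟩ := hI (k + n) i (C.dA x₁ - ρ) (sub_mem hdx₁ hρ) (hdu ▸ neg_mem hdx)
      v hv (hfu ▸ neg_mem hfz)
    refine ⟨w₀ + x₁ - ξ,
      sub_mem (add_mem hw₀ hx₁) (C.FA_antitone _ (Nat.le_add_right k n) hξ), ?_⟩
    have hw : x - C.dA (w₀ + x₁ - ξ) = -(C.dA x₁ - ρ - C.dA ξ) := by
      simp only [hρ_def, map_add, map_sub]; abel
    exact hw ▸ neg_mem hdξ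

theorem quasiIso_of_graded (hS : ∀ k, C.SurjMod k (k + 1)) (hI : ∀ k, C.InjMod k (k + 1))
    {k n : ℕ} (hA : ∀ i, C.FA (k + n) i = ⊥) (hB : ∀ i, C.FB (k + n) i = ⊥) (i : ℤ) :
    (∀ y ∈ C.FB k i, C.dB y = 0 → ∃ x ∈ C.FA k i, C.dA x = 0 ∧
      ∃ z ∈ C.FB k (i - 1), C.f x - y = C.dB z) ∧
    (∀ x ∈ C.FA k i, C.dA x = 0 → (∃ z ∈ C.FB k (i - 1), C.f x = C.dB z) →
      ∃ w ∈ C.FA k (i - 1), x = C.dA w) := by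
  constructor
  · intro y hy hdy
    obtain ⟨x, hx, hdx, z, hz, hxz⟩ := surjMod_add hS hI k n i y hy (hdy ▸ zero_mem _)
    rw [hA, AddSubgroup.mem_bot] at hdx
    rw [hB, AddSubgroup.mem_bot, sub_eq_zero] at hxz
    exact ⟨x, hx, hdx, z, hz, hxz⟩
  · rintro x hx hdx ⟨z, hz, hxz⟩
    obtain ⟨w, hw, hxw⟩ := injMod_add hS hI k n i x hx (hdx ▸ zero_mem _) z hz
      (sub_eq_zero.mpr hxz ▸ zero_mem _)
    rw [hA, AddSubgroup.mem_bot, sub_eq_zero] at hxw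
    exact ⟨w, hw, hxw⟩

end FilteredCochainMap

section Coordinates

variable {K : Type*} [Field K]

-- `e` lifts a basis of `I / J`, and `f` are the dual coordinates, extended to all of `V`.
theorem Submodule.exists_coords_mod {V : Type u} [AddCommGroup V] [Module K V]
    {I J : Submodule K V} (hJI : J ≤ I) :
    ∃ (ι : Type u) (e : ι → V) (f : ι → V →ₗ[K] K), (∀ j, e j ∈ I) ∧
      (∀ j, ∀ a ∈ J, f j a = 0) ∧
      ∀ a ∈ I, ∃ s : Finset ι, (∀ j ∉ s, f j a = 0) ∧ a - ∑ j ∈ s, f j a • e j ∈ J := by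
  classical
  set J' := J.comap I.subtype
  obtain ⟨C, hC⟩ := J'.exists_isCompl
  obtain ⟨I', hI'⟩ := I.exists_isCompl
  set πI := I.projectionOnto I' hI'
  set πC := C.projectionOnto J' hC.symm
  have hπI (a : V) (ha : a ∈ I) : πI a = ⟨a, ha⟩ :=
    Submodule.projectionOnto_apply_of_mem_left hI' ha
  let b := Module.Basis.ofVectorSpace K C
  refine ⟨_, fun j => b j, fun j => b.coord j ∘ₗ πC ∘ₗ πI, fun j => (b j : I).2, ?_, ?_⟩
  · intro j a ha
    have : πC ⟨a, hJI ha⟩ = 0 := Submodule.projectionOnto_apply_of_mem_right hC.symm ha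
    simp [hπI a (hJI ha), this]
  · intro a ha
    set c := πC ⟨a, ha⟩
    refine ⟨(b.repr c).support, fun j hj => ?_, ?_⟩
    · simpa [hπI a ha, c] using Finsupp.notMem_support_iff.mp hj
    have hsum : ∑ j ∈ (b.repr c).support, (b.coord j ∘ₗ πC ∘ₗ πI) a • ((b j : I) : V)
        = ((c : I) : V) := by
      have := congrArg (fun x : C => ((x : I) : V)) (b.linearCombination_repr c)
      simpa [Finsupp.linearCombination_apply, Finsupp.sum, hπI a ha, c] using this
    have hc : πC (⟨a, ha⟩ - (c : I)) = 0 := by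
      rw [map_sub, Submodule.projectionOnto_apply_left, sub_self]
    rw [hsum]
    exact (Submodule.projectionOnto_apply_eq_zero_iff hC.symm).mp hc

variable {R : Type*} [CommRing R] [Algebra K R]
  {M N : Type*} [AddCommGroup M] [Module K M] [AddCommGroup N] [Module K N]

variable (M) in
noncomputable def coordMap (f : R →ₗ[K] K) : R ⊗[K] M →ₗ[K] M :=
  TensorProduct.lid K M ∘ₗ f.rTensor M

@[simp]
lemma coordMap_tmul (f : R →ₗ[K] K) (a : R) (v : M) : coordMap M f (a ⊗ₜ v) = f a • v := by
  simp [coordMap]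

lemma coordMap_lTensor (f : R →ₗ[K] K) (T : M →ₗ[K] N) (v : R ⊗[K] M) :
    coordMap N f (T.lTensor R v) = T (coordMap M f v) := by
  induction v using TensorProduct.induction_on with
  | zero => simp
  | add v v' hv hv' => simp only [map_add, hv, hv']
  | tmul a x => simp

end Coordinates

namespace DGLA

variable {K : Type} [Field K] {R : Type} [CommRing R] [Algebra K R] (g : DGLA K) {h : DGLA K}

section Part

lemma extD_tmul (a : R) (x : g.L) : g.extD R (a ⊗ₜ[K] x) = a ⊗ₜ[K] g.d x := rfl

lemma extBr_tmul (a b : R) (x y : g.L) :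
    g.extBr R (a ⊗ₜ[K] x) (b ⊗ₜ[K] y) = (a * b) ⊗ₜ[K] g.bracket x y := by
  simp [extBr, LinearMap.mul'_apply]

lemma part_mono {I J : Ideal R} (hIJ : I ≤ J) (i : ℤ) : g.part R I i ≤ g.part R J i :=
  Submodule.smul_mono_left hIJ

variable {g}

lemma tmul_mem_part {I : Ideal R} {i : ℤ} {a : R} (ha : a ∈ I) {v : g.L}
    (hv : v ∈ g.grading i) : a ⊗ₜ[K] v ∈ g.part R I i := by
  rw [← mul_one a, ← smul_eq_mul, ← smul_tmul']
  exact Submodule.smul_mem_smul ha (Submodule.tmul_mem_baseChange_of_mem 1 hv)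

@[elab_as_elim]
lemma part_induction {I : Ideal R} {i : ℤ} {P : R ⊗[K] g.L → Prop}
    (zero : P 0) (add : ∀ x y, P x → P y → P (x + y))
    (tmul : ∀ a ∈ I, ∀ v ∈ g.grading i, P (a ⊗ₜ[K] v))
    {x : R ⊗[K] g.L} (hx : x ∈ g.part R I i) : P x := by
  refine Submodule.smul_induction_on hx (fun a ha n hn => ?_) add
  revert a ha
  refine Submodule.span_induction (p := fun n _ => ∀ a ∈ I, P (a • n)) ?_ ?_ ?_ ?_
    (by rwa [Submodule.baseChange_eq_span] at hn)
  · rintro _ ⟨v, hv, rfl⟩ a ha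
    simpa [smul_tmul'] using tmul a ha v hv
  · intro a _; simpa using zero
  · intro x y _ _ hx hy a ha
    rw [smul_add]; exact add _ _ (hx a ha) (hy a ha)
  · intro r x _ hx a ha
    rw [smul_smul]
    exact hx (a * r) (I.mul_mem_right r ha)

lemma extBr_mem_part {I J : Ideal R} {i j : ℤ} {x y : R ⊗[K] g.L}
    (hx : x ∈ g.part R I i) (hy : y ∈ g.part R J j) :
    g.extBr R x y ∈ g.part R (I * J) (i + j) := by
  refine part_induction (by simp) (fun x x' hx hx' => ?_) (fun a ha v hv => ?_) hx
  · rw [map_add, LinearMap.add_apply]; exact add_mem hx hx'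
  refine part_induction (by simp) (fun y y' hy hy' => ?_) (fun b hb w hw => ?_) hy
  · rw [map_add]; exact add_mem hy hy'
  rw [extBr_tmul]
  exact tmul_mem_part (Ideal.mul_mem_mul ha hb) (g.bracket_deg i j v hv w hw)

lemma extBr_mem_part_pow_succ {M : Ideal R} {ω : R ⊗[K] g.L} (hω : ω ∈ g.part R M 1) {k : ℕ}
    {i : ℤ} {x : R ⊗[K] g.L} (hx : x ∈ g.part R (M ^ k) i) :
    g.extBr R ω x ∈ g.part R (M ^ (k + 1)) (i + 1) := by
  rw [pow_succ', add_comm i]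
  exact extBr_mem_part hω hx

lemma Hom.lTensor_mem_part (φ : Hom g h) {I : Ideal R} {i : ℤ} {x : R ⊗[K] g.L}
    (hx : x ∈ g.part R I i) : φ.f.lTensor R x ∈ h.part R I i := by
  refine part_induction (by simp) (fun x y hx hy => ?_) (fun a ha v hv => ?_) hx
  · rw [map_add]; exact add_mem hx hy
  exact tmul_mem_part ha (φ.map_grading i v hv)

end Part

section TwistedDifferential

noncomputable def twistedD (g : DGLA K) (R : Type) [CommRing R] [Algebra K R]
    (ω : R ⊗[K] g.L) : R ⊗[K] g.L →ₗ[K] R ⊗[K] g.L :=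
  g.extD R + g.extBr R ω

lemma extD_extD (v : R ⊗[K] g.L) : g.extD R (g.extD R v) = 0 := by
  rw [extD, ← LinearMap.comp_apply, ← LinearMap.lTensor_comp,
    show g.d ∘ₗ g.d = 0 from LinearMap.ext g.d_sq, LinearMap.lTensor_zero, LinearMap.zero_apply]

variable {g}

lemma bracket_bracket_of_mem_one {x x' y : g.L} (hx : x ∈ g.grading 1)
    (hx' : x' ∈ g.grading 1) {k : ℤ} (hy : y ∈ g.grading k) :
    g.bracket x (g.bracket x' y) + g.bracket x' (g.bracket x y)
      = g.bracket (g.bracket x x') y := by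
  have hj := g.bracket_jacobi 1 1 k x hx x' hx' y hy
  have hxx' : g.bracket x x' ∈ g.grading 2 := by
    simpa using g.bracket_deg 1 1 x hx x' hx'
  rw [g.bracket_antisymm k 1 y hy x hx, g.bracket_antisymm k 2 y hy _ hxx',
    Int.negOnePow_even (k * 2) ⟨k, by ring⟩] at hj
  simp only [one_mul, mul_one, Int.negOnePow_one] at hj
  rcases Int.even_or_odd k with hk | hk
  · rw [Int.negOnePow_even _ hk] at hj
    simp only [Units.val_one, one_smul, Units.val_neg, neg_smul, map_neg, neg_neg] at hj
    linear_combination (norm := abel) hj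
  · rw [Int.negOnePow_odd _ hk] at hj
    simp only [Units.val_one, one_smul, Units.val_neg, neg_smul, smul_neg, neg_neg] at hj
    linear_combination (norm := abel) -hj

lemma d_bracket_of_mem_one {x : g.L} (hx : x ∈ g.grading 1) (y : g.L) :
    g.d (g.bracket x y) = g.bracket (g.d x) y - g.bracket x (g.d y) := by
  simpa [Int.negOnePow_one, sub_eq_add_neg] using g.d_leibniz 1 x hx y

lemma extD_extBr_of_mem_part_one {ω : R ⊗[K] g.L} (hω : ω ∈ g.part R ⊤ 1) (v : R ⊗[K] g.L) :
    g.extD R (g.extBr R ω v) = g.extBr R (g.extD R ω) v - g.extBr R ω (g.extD R v) := by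
  induction v using TensorProduct.induction_on with
  | zero => simp
  | add v v' hv hv' => simp only [map_add, hv, hv']; abel
  | tmul b y =>
    refine part_induction (by simp) (fun x x' hx hx' => ?_) (fun a _ x hx => ?_) hω
    · simp only [map_add, LinearMap.add_apply, hx, hx']; abel
    rw [extBr_tmul, extD_tmul, extD_tmul, extD_tmul, extBr_tmul, extBr_tmul,
      d_bracket_of_mem_one hx y, tmul_sub]

lemma extBr_extBr_of_mem_part_one {α β : R ⊗[K] g.L} (hα : α ∈ g.part R ⊤ 1)
    (hβ : β ∈ g.part R ⊤ 1) (v : R ⊗[K] g.L) :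
    g.extBr R α (g.extBr R β v) + g.extBr R β (g.extBr R α v)
      = g.extBr R (g.extBr R α β) v := by
  induction v using TensorProduct.induction_on with
  | zero => simp
  | add v v' hv hv' => simp only [map_add]; linear_combination (norm := abel) hv + hv'
  | tmul c y =>
    refine part_induction (by simp) (fun α α' hα hα' => ?_) (fun a _ x hx => ?_) hα
    · simp only [map_add, LinearMap.add_apply]; linear_combination (norm := abel) hα + hα'
    refine part_induction (by simp) (fun β β' hβ hβ' => ?_) (fun b _ x' hx' => ?_) hβ
    · simp only [map_add, LinearMap.add_apply]; linear_combination (norm := abel) hβ + hβ'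
    have hy : y ∈ ⨆ k, g.grading k := by
      rw [g.isInternal.submodule_iSup_eq_top]; trivial
    induction hy using Submodule.iSup_induction' with
    | mem k y hy =>
      simp only [extBr_tmul, ← mul_assoc, mul_comm b a, ← tmul_add,
        bracket_bracket_of_mem_one hx hx' hy]
    | zero => simp
    | add y y' _ _ hy hy' =>
      simp only [tmul_add, map_add]; linear_combination (norm := abel) hy + hy'

-- `d_ω² = [d ω + ½ [ω, ω], -]`, by the Leibniz rule and the Jacobi identity.
theorem twistedD_twistedD [CharZero K] {ω : R ⊗[K] g.L} (hω : ω ∈ g.part R ⊤ 1)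
    (hmc : g.curR R ω = 0) (v : R ⊗[K] g.L) :
    g.twistedD R ω (g.twistedD R ω v) = 0 := by
  have hdω : g.extD R ω = -((2 : K)⁻¹ • g.extBr R ω ω) := by
    rw [← algebraMap_smul R]; exact eq_neg_of_add_eq_zero_left hmc
  have hjac : (2 : K)⁻¹ • g.extBr R (g.extBr R ω ω) v = g.extBr R ω (g.extBr R ω v) := by
    rw [← extBr_extBr_of_mem_part_one hω hω, ← two_smul K, smul_smul,
      inv_mul_cancel₀ two_ne_zero, one_smul]
  simp only [twistedD, LinearMap.add_apply, map_add, extD_extD, extD_extBr_of_mem_part_one hω,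
    hdω, map_neg, map_smul, LinearMap.neg_apply, LinearMap.smul_apply, hjac]
  abel

end TwistedDifferential

namespace Hom

variable {g} (φ : Hom g h)

lemma lTensor_extD (v : R ⊗[K] g.L) :
    φ.f.lTensor R (g.extD R v) = h.extD R (φ.f.lTensor R v) := by
  simp only [extD, ← LinearMap.comp_apply, ← LinearMap.lTensor_comp,
    show φ.f ∘ₗ g.d = h.d ∘ₗ φ.f from LinearMap.ext φ.comm_d]

lemma lTensor_extBr (u v : R ⊗[K] g.L) :
    φ.f.lTensor R (g.extBr R u v) = h.extBr R (φ.f.lTensor R u) (φ.f.lTensor R v) := by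
  induction u using TensorProduct.induction_on with
  | zero => simp
  | add u u' hu hu' => simp only [map_add, LinearMap.add_apply, hu, hu']
  | tmul a x =>
    induction v using TensorProduct.induction_on with
    | zero => simp
    | add v v' hv hv' => simp only [map_add, hv, hv']
    | tmul b y => simp only [extBr_tmul, LinearMap.lTensor_tmul, φ.comm_br]

lemma curR_lTensor (ω : R ⊗[K] g.L) :
    h.curR R (φ.f.lTensor R ω) = φ.f.lTensor R (g.curR R ω) := by
  simp only [curR, map_add, algebraMap_smul, map_smul, lTensor_extD, lTensor_extBr]

lemma lTensor_twistedD (ω v : R ⊗[K] g.L) :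
    φ.f.lTensor R (g.twistedD R ω v) = h.twistedD R (φ.f.lTensor R ω) (φ.f.lTensor R v) := by
  simp only [twistedD, LinearMap.add_apply, map_add, lTensor_extD, lTensor_extBr]

end Hom

section GradedQuasiIso

variable {g}

lemma coordMap_mem_grading (f : R →ₗ[K] K) {I : Ideal R} {i : ℤ} {y : R ⊗[K] g.L}
    (hy : y ∈ g.part R I i) : coordMap g.L f y ∈ g.grading i := by
  refine part_induction (by simp) (fun y y' hy hy' => ?_) (fun a _ v hv => ?_) hy
  · rw [map_add]; exact add_mem hy hy'
  rw [coordMap_tmul]; exact Submodule.smul_mem _ _ hv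

lemma coordMap_eq_zero_of_mem_part {J : Ideal R} {f : R →ₗ[K] K} (hf : ∀ a ∈ J, f a = 0)
    {i : ℤ} {y : R ⊗[K] g.L} (hy : y ∈ g.part R J i) : coordMap g.L f y = 0 := by
  refine part_induction (by simp) (fun y y' hy hy' => ?_) (fun a ha v _ => ?_) hy
  · rw [map_add, hy, hy', add_zero]
  rw [coordMap_tmul, hf a ha, zero_smul]

lemma exists_sub_sum_tmul_coordMap_mem_part {I J : Ideal R} {i : ℤ} {ι : Type}
    (e : ι → R) (f : ι → R →ₗ[K] K)
    (hdec : ∀ a ∈ I, ∃ s : Finset ι, (∀ j ∉ s, f j a = 0) ∧ a - ∑ j ∈ s, f j a • e j ∈ J)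
    {y : R ⊗[K] g.L} (hy : y ∈ g.part R I i) :
    ∃ s : Finset ι, (∀ j ∉ s, coordMap g.L (f j) y = 0) ∧
      y - ∑ j ∈ s, e j ⊗ₜ[K] coordMap g.L (f j) y ∈ g.part R J i := by
  classical
  refine part_induction ⟨∅, by simp, by simp⟩ ?_ (fun a ha v hv => ?_) hy
  · rintro y y' ⟨s, hs, hy⟩ ⟨s', hs', hy'⟩
    have hsum (z : R ⊗[K] g.L) (t : Finset ι) (ht : t ⊆ s ∪ s')
        (hz : ∀ j ∉ t, coordMap g.L (f j) z = 0) :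
        ∑ j ∈ s ∪ s', e j ⊗ₜ[K] coordMap g.L (f j) z
          = ∑ j ∈ t, e j ⊗ₜ[K] coordMap g.L (f j) z :=
      (Finset.sum_subset ht fun j _ hj => by rw [hz j hj, tmul_zero]).symm
    refine ⟨s ∪ s', fun j hj => ?_, ?_⟩
    · rw [Finset.notMem_union] at hj; rw [map_add, hs j hj.1, hs' j hj.2, add_zero]
    · simp only [map_add, tmul_add, Finset.sum_add_distrib,
        hsum y s Finset.subset_union_left hs, hsum y' s' Finset.subset_union_right hs']
      convert add_mem hy hy' using 1; abel
  · obtain ⟨s, hs, has⟩ := hdec a ha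
    refine ⟨s, fun j hj => by rw [coordMap_tmul, hs j hj, zero_smul], ?_⟩
    simp only [coordMap_tmul, tmul_smul, smul_tmul', ← sum_tmul, ← sub_tmul]
    exact tmul_mem_part has hv

theorem Hom.IsQuasiIso.surj_mod {φ : Hom g h} (hφ : φ.IsQuasiIso) {I J : Ideal R} (hJI : J ≤ I)
    (i : ℤ) {y : R ⊗[K] h.L} (hy : y ∈ h.part R I i) (hdy : h.extD R y ∈ h.part R J (i + 1)) :
    ∃ x ∈ g.part R I i, g.extD R x = 0 ∧
      ∃ z ∈ h.part R I (i - 1), φ.f.lTensor R x - y - h.extD R z ∈ h.part R J i := by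
  obtain ⟨ι, e, f, he, hfJ, hdec⟩ := Submodule.exists_coords_mod (K := K)
    (I := I.restrictScalars K) (J := J.restrictScalars K) hJI
  have hdyj (j : ι) : h.d (coordMap h.L (f j) y) = 0 := by
    rw [← coordMap_lTensor]; exact coordMap_eq_zero_of_mem_part (hfJ j) hdy
  choose x hx hdx z hz hxz using fun j => (hφ i).1 _ (coordMap_mem_grading (f j) hy) (hdyj j)
  obtain ⟨s, -, hys⟩ := exists_sub_sum_tmul_coordMap_mem_part e f hdec hy
  refine ⟨∑ j ∈ s, e j ⊗ₜ[K] x j, sum_mem fun j _ => tmul_mem_part (he j) (hx j), ?_,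
    ∑ j ∈ s, e j ⊗ₜ[K] z j, sum_mem fun j _ => tmul_mem_part (he j) (hz j), ?_⟩
  · simp [extD_tmul, hdx]
  · simp only [map_sum, LinearMap.lTensor_tmul, extD_tmul, ← hxz, tmul_sub,
      Finset.sum_sub_distrib]
    convert neg_mem hys using 1; abel

theorem Hom.IsQuasiIso.inj_mod {φ : Hom g h} (hφ : φ.IsQuasiIso) {I J : Ideal R} (hJI : J ≤ I)
    (i : ℤ) {u : R ⊗[K] g.L} {v : R ⊗[K] h.L} (hu : u ∈ g.part R I i)
    (hdu : g.extD R u ∈ g.part R J (i + 1)) (hv : v ∈ h.part R I (i - 1))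
    (huv : φ.f.lTensor R u - h.extD R v ∈ h.part R J i) :
    ∃ ξ ∈ g.part R I (i - 1), u - g.extD R ξ ∈ g.part R J i := by
  obtain ⟨ι, e, f, he, hfJ, hdec⟩ := Submodule.exists_coords_mod (K := K)
    (I := I.restrictScalars K) (J := J.restrictScalars K) hJI
  have hduj (j : ι) : g.d (coordMap g.L (f j) u) = 0 := by
    rw [← coordMap_lTensor]; exact coordMap_eq_zero_of_mem_part (hfJ j) hdu
  have huvj (j : ι) : φ.f (coordMap g.L (f j) u) = h.d (coordMap h.L (f j) v) := by
    have := coordMap_eq_zero_of_mem_part (hfJ j) huv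
    rwa [map_sub, coordMap_lTensor, extD, coordMap_lTensor, sub_eq_zero] at this
  choose w hw hdw using fun j => (hφ i).2 _ (coordMap_mem_grading (f j) hu) (hduj j)
    ⟨_, coordMap_mem_grading (f j) hv, huvj j⟩
  obtain ⟨s, -, hus⟩ := exists_sub_sum_tmul_coordMap_mem_part e f hdec hu
  refine ⟨∑ j ∈ s, e j ⊗ₜ[K] w j, sum_mem fun j _ => tmul_mem_part (he j) (hw j), ?_⟩
  simpa only [map_sum, extD_tmul, ← hdw] using hus

end GradedQuasiIso

section TwistedFiltration

variable {g} [CharZero K]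

noncomputable def twistedCochainMap (φ : Hom g h) {M : Ideal R} {ω : R ⊗[K] g.L}
    (hω : ω ∈ g.part R M 1) (hmc : g.curR R ω = 0) :
    FilteredCochainMap (R ⊗[K] g.L) (R ⊗[K] h.L) where
  FA k i := (g.part R (M ^ k) i).toAddSubgroup
  FB k i := (h.part R (M ^ k) i).toAddSubgroup
  dA := (g.twistedD R ω).toAddMonoidHom
  dB := (h.twistedD R (φ.f.lTensor R ω)).toAddMonoidHom
  f := (φ.f.lTensor R).toAddMonoidHom
  FA_antitone i _ _ hkl := g.part_mono (Ideal.pow_le_pow_right hkl) i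
  FB_antitone i _ _ hkl := h.part_mono (Ideal.pow_le_pow_right hkl) i
  dA_dA := twistedD_twistedD (g.part_mono le_top 1 hω) hmc
  dB_dB := twistedD_twistedD (h.part_mono le_top 1 (φ.lTensor_mem_part hω))
    (by rw [φ.curR_lTensor, hmc, map_zero])
  f_dA := φ.lTensor_twistedD ω
  f_mem _ _ _ hx := φ.lTensor_mem_part hx

variable {φ : Hom g h} {M : Ideal R} {ω : R ⊗[K] g.L}

theorem twistedCochainMap_surjMod_succ (hφ : φ.IsQuasiIso) (hω : ω ∈ g.part R M 1)
    (hmc : g.curR R ω = 0) (k : ℕ) :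
    (twistedCochainMap φ hω hmc).SurjMod k (k + 1) := by
  intro i y hy hdy
  simp only [twistedCochainMap, LinearMap.toAddMonoidHom_coe, Submodule.mem_toAddSubgroup]
    at hy hdy ⊢
  have hχ := φ.lTensor_mem_part hω
  have hdy₀ : h.extD R y ∈ h.part R (M ^ (k + 1)) (i + 1) := by
    simpa [twistedD] using sub_mem hdy (extBr_mem_part_pow_succ hχ hy)
  obtain ⟨x, hx, hdx, z, hz, hxz⟩ :=
    hφ.surj_mod (Ideal.pow_le_pow_right (k.le_add_right 1)) i hy hdy₀
  have hχz := extBr_mem_part_pow_succ hχ hz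
  rw [sub_add_cancel] at hχz
  refine ⟨x, hx, ?_, z, hz, ?_⟩
  · simpa [twistedD, hdx] using extBr_mem_part_pow_succ hω hx
  · rw [twistedD, LinearMap.add_apply, ← sub_sub]
    exact sub_mem hxz hχz

theorem twistedCochainMap_injMod_succ (hφ : φ.IsQuasiIso) (hω : ω ∈ g.part R M 1)
    (hmc : g.curR R ω = 0) (k : ℕ) :
    (twistedCochainMap φ hω hmc).InjMod k (k + 1) := by
  intro i x hx hdx z hz hxz
  simp only [twistedCochainMap, LinearMap.toAddMonoidHom_coe, Submodule.mem_toAddSubgroup]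
    at hx hdx hz hxz ⊢
  have hχz := extBr_mem_part_pow_succ (φ.lTensor_mem_part hω) hz
  rw [sub_add_cancel] at hχz
  have hdx₀ : g.extD R x ∈ g.part R (M ^ (k + 1)) (i + 1) := by
    simpa [twistedD] using sub_mem hdx (extBr_mem_part_pow_succ hω hx)
  have hxz₀ : φ.f.lTensor R x - h.extD R z ∈ h.part R (M ^ (k + 1)) i := by
    simpa [twistedD, sub_add_eq_sub_sub] using add_mem hxz hχz
  obtain ⟨ξ, hξ, hxξ⟩ :=
    hφ.inj_mod (Ideal.pow_le_pow_right (k.le_add_right 1)) i hx hdx₀ hz hxz₀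
  have hωξ := extBr_mem_part_pow_succ hω hξ
  rw [sub_add_cancel] at hωξ
  refine ⟨ξ, hξ, ?_⟩
  rw [twistedD, LinearMap.add_apply, ← sub_sub]
  exact sub_mem hxξ hωξ

end TwistedFiltration

end DGLA

theorem stmt12_general {K : Type} [Field K] [CharZero K] (g h : DGLA K)
    (φ : DGLA.Hom g h) (hφ : φ.IsQuasiIso)
    (R : Type) [CommRing R] [Algebra K R] [IsArtinianRing R] [IsLocalRing R]
    (ω : R ⊗[K] g.L) (hω : ω ∈ g.part R (IsLocalRing.maximalIdeal R) 1)
    (hmc : g.curR R ω = 0) :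
    let m := IsLocalRing.maximalIdeal R
    let φR := LinearMap.lTensor R φ.f
    let χ := φR ω
    let dω : R ⊗[K] g.L → R ⊗[K] g.L := fun v => g.extD R v + g.extBr R ω v
    let dχ : R ⊗[K] h.L → R ⊗[K] h.L := fun v => h.extD R v + h.extBr R χ v
    ∀ i : ℤ,
      (∀ y ∈ h.part R m i, dχ y = 0 → ∃ x ∈ g.part R m i, dω x = 0 ∧
        ∃ z ∈ h.part R m (i - 1), φR x - y = dχ z) ∧
      (∀ x ∈ g.part R m i, dω x = 0 → (∃ z ∈ h.part R m (i - 1), φR x = dχ z) →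
        ∃ w ∈ g.part R m (i - 1), x = dω w) := by
  intro m φR χ dω dχ i
  obtain ⟨N, hN⟩ : IsNilpotent m := by
    simpa [IsLocalRing.jacobson_eq_maximalIdeal ⊥ bot_ne_top] using
      IsArtinianRing.isNilpotent_jacobson_bot (R := R)
  have hm : IsLocalRing.maximalIdeal R ^ (1 + N) = ⊥ := by
    rw [pow_add, hN, mul_zero, Submodule.zero_eq_bot]
  have key := (DGLA.twistedCochainMap φ hω hmc).quasiIso_of_graded (k := 1) (n := N)
    (DGLA.twistedCochainMap_surjMod_succ hφ hω hmc) (DGLA.twistedCochainMap_injMod_succ hφ hω hmc)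
    (fun i => by simp [DGLA.twistedCochainMap, hm, DGLA.part])
    (fun i => by simp [DGLA.twistedCochainMap, hm, DGLA.part]) i
  simp only [DGLA.twistedCochainMap, LinearMap.toAddMonoidHom_coe, Submodule.mem_toAddSubgroup,
    pow_one] at key
  exact key

/-- for a quasi-isomorphism `φ : g → h` of DG Lie algebras and an artinian
local `K`-algebra `(R, m)` with `R/m = K`, and any `ω ∈ MC(m ⊗ g)` with
`χ := φ(ω)`, the induced map `φ : (m ⊗ g, d_ω) → (m ⊗ h, d_χ)` is a quasi-isomorphism
of complexes. -/
theorem stmt12 {K : Type} [Field K] [CharZero K] (g h : DGLA K)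
    (φ : DGLA.Hom g h) (hφ : φ.IsQuasiIso)
    (R : Type) [CommRing R] [Algebra K R] [IsArtinianRing R] [IsLocalRing R]
    (hres : Function.Bijective (algebraMap K (R ⧸ IsLocalRing.maximalIdeal R)))
    (ω : R ⊗[K] g.L) (hω : ω ∈ g.part R (IsLocalRing.maximalIdeal R) 1)
    (hmc : g.curR R ω = 0) :
    let m := IsLocalRing.maximalIdeal R
    let φR := LinearMap.lTensor R φ.f
    let χ := φR ω
    let dω : R ⊗[K] g.L → R ⊗[K] g.L := fun v => g.extD R v + g.extBr R ω v
    let dχ : R ⊗[K] h.L → R ⊗[K] h.L := fun v => h.extD R v + h.extBr R χ v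
    ∀ i : ℤ,
      (∀ y ∈ h.part R m i, dχ y = 0 → ∃ x ∈ g.part R m i, dω x = 0 ∧
        ∃ z ∈ h.part R m (i - 1), φR x - y = dχ z) ∧
      (∀ x ∈ g.part R m i, dω x = 0 → (∃ z ∈ h.part R m (i - 1), φR x = dχ z) →
        ∃ w ∈ g.part R m (i - 1), x = dω w) :=
  stmt12_general g h φ hφ R ω hω hmc
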